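/- Let r ∈ (0,1) and α(t) = √(1−r²)w + r cos(2πt)v₁ + r sin(2πt)v₀ for a positively oriented orthonormal basis {v₀,v₁,w}. For the solution operator L = −D_t² + 1 (where D_t is the covariant derivative along α on the round S²), there holds L(α̇) = (4π²(1−r²)+1)·α̇. Equivalently, W(t) = (1 + 4π²(1−r²))⁻¹ α̇(t) is the unique 1-periodic tangent vector field along α solving (−D_t² + 1)W = α̇. -/

import Mathlib

open Real MeasureTheory Filter

noncomputable def dot3 (u v : Fin 3 → ℝ) : ℝ := ∑ i, u i * v i

noncomputable def norm3 (u : Fin 3 → ℝ) : ℝ := Real.sqrt (dot3 u u)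

noncomputable def cross3 (u v : Fin 3 → ℝ) : Fin 3 → ℝ :=
  ![u 1 * v 2 - u 2 * v 1, u 2 * v 0 - u 0 * v 2, u 0 * v 1 - u 1 * v 0]

/-- Projection onto the orthogonal complement of `x`. -/
noncomputable def proj3 (x v : Fin 3 → ℝ) : Fin 3 → ℝ := v - dot3 v x • x

/-- Covariant derivative of a tangent field `V` along a sphere-valued curve `γ`
(tangential projection of the ambient derivative). -/
noncomputable def covDeriv (γ V : ℝ → Fin 3 → ℝ) : ℝ → Fin 3 → ℝ :=
  fun t => proj3 (γ t) (deriv V t)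

/-!
Along the latitude circle `α` the ambient acceleration is `α̈ = -4π² (α - √(1 - r²) w)`, so
`D_t α̇ = 4π² (√(1 - r²) w - (1 - r²) α)`; its ambient derivative `-4π² (1 - r²) α̇` is already
tangent, whence `D_t² α̇ = -4π² (1 - r²) α̇`.

For uniqueness, the difference `U` of two periodic solutions is a periodic tangent field with
`D_t² U = U`. Since `U` is tangent, `f = ⟨U̇, U⟩ = ⟨D_t U, U⟩` has derivative
`⟨D_t² U, U⟩ + |D_t U|² = |U|² + |D_t U|² ≥ 0`. A monotone periodic function is constant, so this
derivative vanishes and `U = 0`.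
-/

open Matrix Function

theorem HasDerivAt.dotProduct {n : Type*} [Fintype n] {f g : ℝ → n → ℝ} {f' g' : n → ℝ} {t : ℝ}
    (hf : HasDerivAt f f' t) (hg : HasDerivAt g g' t) :
    HasDerivAt (fun s => f s ⬝ᵥ g s) (f' ⬝ᵥ g t + f t ⬝ᵥ g') t := by
  have := HasDerivAt.fun_sum fun i (_ : i ∈ Finset.univ) =>
    (hasDerivAt_pi.1 hf i).mul (hasDerivAt_pi.1 hg i)
  exact this.congr_deriv (by rw [Finset.sum_add_distrib]; rfl)

theorem Monotone.eq_of_periodic {α : Type*} [PartialOrder α] {f : ℝ → α} (hf : Monotone f)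
    {c : ℝ} (hc : 0 < c) (hp : Periodic f c) (x y : ℝ) : f x = f y := by
  wlog hxy : x ≤ y generalizing x y
  · exact (this y x (le_of_not_ge hxy)).symm
  obtain ⟨n, hn⟩ := exists_nat_ge ((y - x) / c)
  have hy : y ≤ x + n * c := by rw [div_le_iff₀ hc] at hn; linarith
  exact le_antisymm (hf hxy) (by simpa only [hp.nat_mul n x] using hf hy)

theorem Function.Periodic.deriv {E : Type*} [NormedAddCommGroup E] [NormedSpace ℝ E]
    {f : ℝ → E} {c : ℝ} (hf : Periodic f c) : Periodic (deriv f) c := fun t => by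
  rw [← deriv_comp_add_const, funext hf]

lemma dotProduct_self_nonneg {n : Type*} [Fintype n] (v : n → ℝ) : 0 ≤ v ⬝ᵥ v :=
  Finset.sum_nonneg fun i _ => mul_self_nonneg (v i)

lemma dot3_eq_dotProduct (u v : Fin 3 → ℝ) : dot3 u v = u ⬝ᵥ v := rfl

section Projection

variable {x u v v' : Fin 3 → ℝ}

lemma proj3_dotProduct_of_dotProduct_eq_zero (hu : u ⬝ᵥ x = 0) :
    proj3 x v ⬝ᵥ u = v ⬝ᵥ u := by
  rw [proj3, sub_dotProduct, smul_dotProduct, dotProduct_comm x, hu, smul_zero, sub_zero]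

lemma proj3_dotProduct_self (hx : x ⬝ᵥ x = 1) : proj3 x v ⬝ᵥ x = 0 := by
  rw [proj3, sub_dotProduct, smul_dotProduct, hx, dot3_eq_dotProduct, smul_eq_mul, mul_one,
    sub_self]

lemma proj3_of_dotProduct_eq_zero (hv : v ⬝ᵥ x = 0) : proj3 x v = v := by
  rw [proj3, dot3_eq_dotProduct, hv, zero_smul, sub_zero]

lemma proj3_sub_smul (c : ℝ) : proj3 x (v - c • v') = proj3 x v - c • proj3 x v' := by
  simp only [proj3, dot3_eq_dotProduct, sub_dotProduct, smul_dotProduct, smul_eq_mul]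
  module

end Projection

section CovariantDerivative

variable {γ U V V' : ℝ → Fin 3 → ℝ}

lemma covDeriv_sub_smul (hV : Differentiable ℝ V) (hV' : Differentiable ℝ V') (c : ℝ) :
    covDeriv γ (V - c • V') = covDeriv γ V - c • covDeriv γ V' := by
  funext t
  simp only [covDeriv, Pi.sub_apply, Pi.smul_apply, ← proj3_sub_smul,
    deriv_sub (hV t) ((hV' t).const_smul c), deriv_const_smul c (hV' t)]

lemma differentiable_covDeriv (hγ : Differentiable ℝ γ) (hV : ContDiff ℝ 2 V) :
    Differentiable ℝ (covDeriv γ V) := by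
  have hV' : Differentiable ℝ (deriv V) :=
    ((contDiff_succ_iff_deriv (n := 1)).mp hV).2.2.differentiable one_ne_zero
  intro t
  have := (hV' t).hasDerivAt.sub (((hV' t).hasDerivAt.dotProduct (hγ t).hasDerivAt).smul
    (hγ t).hasDerivAt)
  exact this.differentiableAt

lemma neg_covDeriv_covDeriv_add_self_sub_smul (hγ : Differentiable ℝ γ) (hV : ContDiff ℝ 2 V)
    (hV' : ContDiff ℝ 2 V') (c t : ℝ) :
    -covDeriv γ (covDeriv γ (V - c • V')) t + (V - c • V') t =
      (-covDeriv γ (covDeriv γ V) t + V t) - c • (-covDeriv γ (covDeriv γ V') t + V' t) := by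
  rw [covDeriv_sub_smul (hV.differentiable two_ne_zero) (hV'.differentiable two_ne_zero),
    covDeriv_sub_smul (differentiable_covDeriv hγ hV) (differentiable_covDeriv hγ hV')]
  simp only [Pi.sub_apply, Pi.smul_apply]
  module

lemma hasDerivAt_deriv_dotProduct_self (hγ : ∀ t, γ t ⬝ᵥ γ t = 1) (hU : ∀ t, U t ⬝ᵥ γ t = 0)
    (hUd : Differentiable ℝ U) (hDU : Differentiable ℝ (covDeriv γ U)) (t : ℝ) :
    HasDerivAt (fun s => deriv U s ⬝ᵥ U s)
      (covDeriv γ (covDeriv γ U) t ⬝ᵥ U t + covDeriv γ U t ⬝ᵥ covDeriv γ U t) t := by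
  have hfun : (fun s => deriv U s ⬝ᵥ U s) = fun s => covDeriv γ U s ⬝ᵥ U s :=
    funext fun s => (proj3_dotProduct_of_dotProduct_eq_zero (hU s)).symm
  have hDU_tan : covDeriv γ U t ⬝ᵥ γ t = 0 := proj3_dotProduct_self (hγ t)
  rw [hfun]
  convert (hDU t).hasDerivAt.dotProduct (hUd t).hasDerivAt using 2
  · exact proj3_dotProduct_of_dotProduct_eq_zero (hU t)
  · rw [dotProduct_comm _ (deriv U t)]
    exact proj3_dotProduct_of_dotProduct_eq_zero hDU_tan

theorem eq_zero_of_periodic_of_neg_covDeriv_covDeriv_add_self_eq_zero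
    (hγ : ∀ t, γ t ⬝ᵥ γ t = 1) (hγd : Differentiable ℝ γ)
    (hU : ContDiff ℝ 2 U) (hUtan : ∀ t, U t ⬝ᵥ γ t = 0) {c : ℝ} (hc : 0 < c)
    (hUper : Periodic U c) (hL : ∀ t, -covDeriv γ (covDeriv γ U) t + U t = 0) (t : ℝ) :
    U t = 0 := by
  have hUd : Differentiable ℝ U := hU.differentiable two_ne_zero
  have hE := hasDerivAt_deriv_dotProduct_self hγ hUtan hUd (differentiable_covDeriv hγd hU)
  set f := fun s => deriv U s ⬝ᵥ U s
  have hE' : ∀ s, HasDerivAt f (U s ⬝ᵥ U s + covDeriv γ U s ⬝ᵥ covDeriv γ U s) s := fun s => by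
    simpa only [neg_add_eq_zero.mp (hL s)] using hE s
  have hmono : Monotone f := monotone_of_deriv_nonneg (fun s => (hE' s).differentiableAt)
    fun s => (hE' s).deriv ▸ add_nonneg (dotProduct_self_nonneg _) (dotProduct_self_nonneg _)
  have hconst : f = fun _ => f 0 :=
    funext fun s => hmono.eq_of_periodic hc (fun s => by simp only [f, hUper.deriv s, hUper s]) s 0
  have hzero : U t ⬝ᵥ U t + covDeriv γ U t ⬝ᵥ covDeriv γ U t = 0 :=
    (hE' t).unique (by rw [hconst]; exact hasDerivAt_const t (f 0))
  rw [← dotProduct_self_eq_zero]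
  linarith [dotProduct_self_nonneg (U t), dotProduct_self_nonneg (covDeriv γ U t)]

end CovariantDerivative

structure IsOrthonormalTriple (v₀ v₁ w : Fin 3 → ℝ) : Prop where
  v₀_v₀ : v₀ ⬝ᵥ v₀ = 1
  v₁_v₁ : v₁ ⬝ᵥ v₁ = 1
  w_w : w ⬝ᵥ w = 1
  v₀_v₁ : v₀ ⬝ᵥ v₁ = 0
  v₀_w : v₀ ⬝ᵥ w = 0
  v₁_w : v₁ ⬝ᵥ w = 0

noncomputable def latitudeCircle (r : ℝ) (v₀ v₁ w : Fin 3 → ℝ) : ℝ → Fin 3 → ℝ := fun t =>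
  √(1 - r ^ 2) • w + (r * cos (2 * π * t)) • v₁ + (r * sin (2 * π * t)) • v₀

noncomputable def latitudeVelocity (r : ℝ) (v₀ v₁ : Fin 3 → ℝ) : ℝ → Fin 3 → ℝ := fun t =>
  (2 * π * r) • (cos (2 * π * t) • v₀ - sin (2 * π * t) • v₁)

section LatitudeCircle

variable {r : ℝ} {v₀ v₁ w : Fin 3 → ℝ}

lemma hasDerivAt_latitudeCircle (t : ℝ) :
    HasDerivAt (latitudeCircle r v₀ v₁ w) (latitudeVelocity r v₀ v₁ t) t := by
  have hθ : HasDerivAt (fun s => 2 * π * s) (2 * π) t := by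
    simpa using (hasDerivAt_id t).const_mul (2 * π)
  have hc := (((hasDerivAt_cos _).comp t hθ).const_mul r).smul_const v₁
  have hs := (((hasDerivAt_sin _).comp t hθ).const_mul r).smul_const v₀
  refine (((hasDerivAt_const t (√(1 - r ^ 2) • w)).add hc).add hs).congr_deriv ?_
  simp only [latitudeVelocity]
  module

lemma deriv_latitudeCircle : deriv (latitudeCircle r v₀ v₁ w) = latitudeVelocity r v₀ v₁ :=
  funext fun t => (hasDerivAt_latitudeCircle t).deriv

lemma hasDerivAt_latitudeVelocity (w : Fin 3 → ℝ) (t : ℝ) :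
    HasDerivAt (latitudeVelocity r v₀ v₁)
      (-(4 * π ^ 2) • (latitudeCircle r v₀ v₁ w t - √(1 - r ^ 2) • w)) t := by
  have hθ : HasDerivAt (fun s => 2 * π * s) (2 * π) t := by
    simpa using (hasDerivAt_id t).const_mul (2 * π)
  have hc := ((hasDerivAt_cos _).comp t hθ).smul_const v₀
  have hs := ((hasDerivAt_sin _).comp t hθ).smul_const v₁
  refine ((hc.sub hs).const_smul (2 * π * r)).congr_deriv ?_
  simp only [latitudeCircle]
  module

lemma contDiff_latitudeVelocity : ContDiff ℝ 2 (latitudeVelocity r v₀ v₁) := by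
  unfold latitudeVelocity
  fun_prop

lemma periodic_latitudeVelocity : Periodic (latitudeVelocity r v₀ v₁) 1 := fun t => by
  simp only [latitudeVelocity, mul_add, mul_one, cos_add_two_pi, sin_add_two_pi]

variable (hf : IsOrthonormalTriple v₀ v₁ w)
include hf

lemma latitudeCircle_dotProduct_self (hr : r ^ 2 ≤ 1) (t : ℝ) :
    latitudeCircle r v₀ v₁ w t ⬝ᵥ latitudeCircle r v₀ v₁ w t = 1 := by
  have hs : √(1 - r ^ 2) * √(1 - r ^ 2) = 1 - r ^ 2 := mul_self_sqrt (by linarith)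
  simp only [latitudeCircle, add_dotProduct, dotProduct_add, smul_dotProduct, dotProduct_smul,
    smul_eq_mul, dotProduct_comm _ v₀, dotProduct_comm w v₁, hf.v₀_v₀, hf.v₁_v₁, hf.w_w,
    hf.v₀_v₁, hf.v₀_w, hf.v₁_w]
  linear_combination hs + r ^ 2 * sin_sq_add_cos_sq (2 * π * t)

lemma latitudeVelocity_dotProduct_latitudeCircle (t : ℝ) :
    latitudeVelocity r v₀ v₁ t ⬝ᵥ latitudeCircle r v₀ v₁ w t = 0 := by
  simp only [latitudeCircle, latitudeVelocity, sub_dotProduct, dotProduct_add,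
    smul_dotProduct, dotProduct_smul, smul_eq_mul, dotProduct_comm v₁ v₀, hf.v₀_v₀, hf.v₁_v₁,
    hf.v₀_v₁, hf.v₀_w, hf.v₁_w]
  ring

lemma latitudeCircle_dotProduct_axis (t : ℝ) : latitudeCircle r v₀ v₁ w t ⬝ᵥ w = √(1 - r ^ 2) := by
  simp only [latitudeCircle, add_dotProduct, smul_dotProduct, smul_eq_mul, hf.w_w, hf.v₀_w,
    hf.v₁_w]
  ring

lemma covDeriv_latitudeVelocity (hr : r ^ 2 ≤ 1) :
    covDeriv (latitudeCircle r v₀ v₁ w) (latitudeVelocity r v₀ v₁) =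
      fun t => (4 * π ^ 2) • (√(1 - r ^ 2) • w - (1 - r ^ 2) • latitudeCircle r v₀ v₁ w t) := by
  funext t
  have hs : √(1 - r ^ 2) * √(1 - r ^ 2) = 1 - r ^ 2 := mul_self_sqrt (by linarith)
  rw [covDeriv, (hasDerivAt_latitudeVelocity w t).deriv, proj3, dot3_eq_dotProduct]
  simp only [smul_dotProduct, sub_dotProduct, dotProduct_comm w,
    latitudeCircle_dotProduct_self hf hr, latitudeCircle_dotProduct_axis hf, smul_eq_mul]
  linear_combination (norm := module) (-(4 * π ^ 2) * hs) • latitudeCircle r v₀ v₁ w t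

lemma covDeriv_covDeriv_latitudeVelocity (hr : r ^ 2 ≤ 1) :
    covDeriv (latitudeCircle r v₀ v₁ w)
        (covDeriv (latitudeCircle r v₀ v₁ w) (latitudeVelocity r v₀ v₁)) =
      fun t => -(4 * π ^ 2 * (1 - r ^ 2)) • latitudeVelocity r v₀ v₁ t := by
  funext t
  have hD : HasDerivAt
      (fun s => (4 * π ^ 2) • (√(1 - r ^ 2) • w - (1 - r ^ 2) • latitudeCircle r v₀ v₁ w s))
      ((4 * π ^ 2) • -((1 - r ^ 2) • latitudeVelocity r v₀ v₁ t)) t :=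
    (((hasDerivAt_latitudeCircle t).fun_const_smul _).const_sub _).fun_const_smul _
  rw [covDeriv_latitudeVelocity hf hr, covDeriv, hD.deriv, proj3_of_dotProduct_eq_zero]
  · module
  · simp only [smul_dotProduct, neg_dotProduct, latitudeVelocity_dotProduct_latitudeCircle hf,
      smul_zero, neg_zero]

lemma neg_covDeriv_covDeriv_latitudeVelocity_add_self (hr : r ^ 2 ≤ 1) (t : ℝ) :
    -covDeriv (latitudeCircle r v₀ v₁ w)
        (covDeriv (latitudeCircle r v₀ v₁ w) (latitudeVelocity r v₀ v₁)) t +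
      latitudeVelocity r v₀ v₁ t =
      (4 * π ^ 2 * (1 - r ^ 2) + 1) • latitudeVelocity r v₀ v₁ t := by
  rw [covDeriv_covDeriv_latitudeVelocity hf hr]
  module

end LatitudeCircle

theorem stmt13_general (r : ℝ) (hr : 0 < r) (hr1 : r < 1)
    (v₀ v₁ w : Fin 3 → ℝ)
    (h00 : dot3 v₀ v₀ = 1) (h11 : dot3 v₁ v₁ = 1) (hww : dot3 w w = 1)
    (h01 : dot3 v₀ v₁ = 0) (h0w : dot3 v₀ w = 0) (h1w : dot3 v₁ w = 0) :
    let α : ℝ → Fin 3 → ℝ := fun t =>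
      Real.sqrt (1 - r ^ 2) • w + (r * Real.cos (2 * π * t)) • v₁
        + (r * Real.sin (2 * π * t)) • v₀
    (∀ t, -(covDeriv α (covDeriv α (deriv α)) t) + deriv α t
        = (4 * π ^ 2 * (1 - r ^ 2) + 1) • deriv α t) ∧
    (∀ W : ℝ → Fin 3 → ℝ, ContDiff ℝ 2 W → (∀ t, dot3 (W t) (α t) = 0) →
      Function.Periodic W 1 →
      (∀ t, -(covDeriv α (covDeriv α W) t) + W t = deriv α t) →
      ∀ t, W t = (1 + 4 * π ^ 2 * (1 - r ^ 2))⁻¹ • deriv α t) := by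
  intro α
  rw [show α = latitudeCircle r v₀ v₁ w from rfl, deriv_latitudeCircle]
  have hr2 : r ^ 2 ≤ 1 := by nlinarith
  have hf : IsOrthonormalTriple v₀ v₁ w := ⟨h00, h11, hww, h01, h0w, h1w⟩
  have heigen := neg_covDeriv_covDeriv_latitudeVelocity_add_self hf hr2
  refine ⟨heigen, fun W hW hWtan hWper hL t => ?_⟩
  set c := (1 + 4 * π ^ 2 * (1 - r ^ 2))⁻¹
  have hc : c * (4 * π ^ 2 * (1 - r ^ 2) + 1) = 1 := by
    rw [add_comm]
    exact inv_mul_cancel₀ (by nlinarith [pi_pos])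
  have hαd : Differentiable ℝ (latitudeCircle r v₀ v₁ w) :=
    fun s => (hasDerivAt_latitudeCircle s).differentiableAt
  have hvel := contDiff_latitudeVelocity (r := r) (v₀ := v₀) (v₁ := v₁)
  rw [← sub_eq_zero]
  refine eq_zero_of_periodic_of_neg_covDeriv_covDeriv_add_self_eq_zero
    (U := W - c • latitudeVelocity r v₀ v₁) (latitudeCircle_dotProduct_self hf hr2) hαd
    (hW.sub (hvel.const_smul c)) (fun s => ?_) one_pos
    (hWper.sub (periodic_latitudeVelocity.smul c)) (fun s => ?_) t
  · rw [Pi.sub_apply, sub_dotProduct, Pi.smul_apply, smul_dotProduct,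
      latitudeVelocity_dotProduct_latitudeCircle hf, smul_zero, sub_zero]
    exact hWtan s
  · rw [neg_covDeriv_covDeriv_add_self_sub_smul hαd hW hvel, hL, heigen, smul_smul, hc, one_smul,
      sub_self]

theorem stmt13 (r : ℝ) (hr : 0 < r) (hr1 : r < 1)
    (v₀ v₁ w : Fin 3 → ℝ)
    (h00 : dot3 v₀ v₀ = 1) (h11 : dot3 v₁ v₁ = 1) (hww : dot3 w w = 1)
    (h01 : dot3 v₀ v₁ = 0) (h0w : dot3 v₀ w = 0) (h1w : dot3 v₁ w = 0)
    (horient : cross3 v₁ v₀ = w) :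
    let α : ℝ → Fin 3 → ℝ := fun t =>
      Real.sqrt (1 - r ^ 2) • w + (r * Real.cos (2 * π * t)) • v₁
        + (r * Real.sin (2 * π * t)) • v₀
    (∀ t, -(covDeriv α (covDeriv α (deriv α)) t) + deriv α t
        = (4 * π ^ 2 * (1 - r ^ 2) + 1) • deriv α t) ∧
    (∀ W : ℝ → Fin 3 → ℝ, ContDiff ℝ 2 W → (∀ t, dot3 (W t) (α t) = 0) →
      Function.Periodic W 1 →
      (∀ t, -(covDeriv α (covDeriv α W) t) + W t = deriv α t) →
      ∀ t, W t = (1 + 4 * π ^ 2 * (1 - r ^ 2))⁻¹ • deriv α t) :=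
  stmt13_general r hr hr1 v₀ v₁ w h00 h11 hww h01 h0w h1w
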